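/- The SAT-projection operators D^P_cv = A D^S_cv and D^P_vc = D_vc A mimic the periodic integration-by-parts formula exactly: u^T H_c D^P_vc h + (Ah)^T H_v D^P_cv u = 0 for all u ∈ ℝ^N, h ∈ ℝ^{N+1}. -/

import Mathlib

open Matrix

/-- The interface projection matrix `A` (`H_v`-orthogonal projection onto functions
continuous at the periodic interface), `H_v = diagonal dv`. -/
noncomputable def projA (N : ℕ) (dv : Fin (N + 1) → ℝ) : Matrix (Fin (N + 1)) (Fin (N + 1)) ℝ :=
  Matrix.of fun i j =>
    if i = 0 ∨ i = Fin.last N then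
      (if j = 0 then dv 0 / (dv 0 + dv (Fin.last N))
       else if j = Fin.last N then dv (Fin.last N) / (dv 0 + dv (Fin.last N))
       else 0)
    else if j = i then 1 else 0

set_option linter.unusedVariables false

lemma projA_mulVec (N : ℕ) (hN : 0 < N) (dv : Fin (N+1) → ℝ) (w : Fin (N+1) → ℝ) :
    (projA N dv).mulVec w = fun i =>
      if i = 0 ∨ i = Fin.last N then
        (dv 0 * w 0 + dv (Fin.last N) * w (Fin.last N)) / (dv 0 + dv (Fin.last N))
      else w i := by
  have h0L : (0 : Fin (N+1)) ≠ Fin.last N := by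
    simp [Fin.ext_iff, Fin.last]; omega
  funext i
  simp only [mulVec, dotProduct, projA, Matrix.of_apply]
  by_cases hi : i = 0 ∨ i = Fin.last N
  · simp only [hi, if_true]
    rw [← Finset.sum_subset (Finset.subset_univ ({0, Fin.last N} : Finset (Fin (N+1))))
      (fun j _ hj => by
        simp only [Finset.mem_insert, Finset.mem_singleton, not_or] at hj
        simp [hj.1, hj.2])]
    rw [Finset.sum_pair h0L]
    simp [h0L, h0L.symm]
    ring
  · simp only [hi, if_false]
    simp [Finset.sum_ite_eq', ite_mul]

/-- The SAT-projection operators `D^P_cv = A D^S_cv` and `D^P_vc = D_vc A` mimic the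
periodic integration-by-parts formula exactly:
`uᵀ H_c D^P_vc h + (Ah)ᵀ H_v D^P_cv u = 0` for all `u ∈ ℝ^N`, `h ∈ ℝ^{N+1}`. -/
theorem sat_projection_ibp (N : ℕ) (hN : 0 < N)
    (Hc : Matrix (Fin N) (Fin N) ℝ) (Hv : Matrix (Fin (N + 1)) (Fin (N + 1)) ℝ)
    (dc : Fin N → ℝ) (dv : Fin (N + 1) → ℝ)
    (hHc : Hc = Matrix.diagonal dc) (hdc : ∀ i, 0 < dc i)
    (hHv : Hv = Matrix.diagonal dv) (hdv : ∀ i, 0 < dv i)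
    (Dvc : Matrix (Fin N) (Fin (N + 1)) ℝ) (Dcv : Matrix (Fin (N + 1)) (Fin N) ℝ)
    (l r : Fin N → ℝ)
    (hsbp : ∀ (u : Fin N → ℝ) (h : Fin (N + 1) → ℝ),
      u ⬝ᵥ Hc.mulVec (Dvc.mulVec h) =
        -(h ⬝ᵥ Hv.mulVec (Dcv.mulVec u)) + h (Fin.last N) * (r ⬝ᵥ u) - h 0 * (l ⬝ᵥ u))
    (el er : Fin (N + 1) → ℝ)
    (hel : el = Pi.single 0 1) (her : er = Pi.single (Fin.last N) 1)
    (DScv : Matrix (Fin (N + 1)) (Fin N) ℝ)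
    (hDScv : DScv = Dcv - (1 / 2 : ℝ) • (Hv⁻¹ * Matrix.vecMulVec (er + el) (r - l)))
    (A : Matrix (Fin (N + 1)) (Fin (N + 1)) ℝ) (hA : A = projA N dv)
    (DPcv : Matrix (Fin (N + 1)) (Fin N) ℝ) (hDPcv : DPcv = A * DScv)
    (DPvc : Matrix (Fin N) (Fin (N + 1)) ℝ) (hDPvc : DPvc = Dvc * A) :
    ∀ (u : Fin N → ℝ) (h : Fin (N + 1) → ℝ),
      u ⬝ᵥ Hc.mulVec (DPvc.mulVec h) + (A.mulVec h) ⬝ᵥ Hv.mulVec (DPcv.mulVec u) = 0 := by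
  intro u h
  subst hHc hHv hel her hDScv hA hDPcv hDPvc
  set L := Fin.last N with hL
  have h0L : (0 : Fin (N+1)) ≠ L := by
    simp [hL, Fin.ext_iff, Fin.last]; omega
  have hS : dv 0 + dv L ≠ 0 := (add_pos (hdv 0) (hdv L)).ne'
  set g : Fin (N+1) → ℝ := (projA N dv).mulVec h with hg
  have hg0 : g 0 = (dv 0 * h 0 + dv L * h L) / (dv 0 + dv L) := by
    rw [hg, projA_mulVec N hN, ← hL]; simp
  have hgL : g L = (dv 0 * h 0 + dv L * h L) / (dv 0 + dv L) := by
    rw [hg, projA_mulVec N hN, ← hL]; simp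
  -- a dot-product formula for the diagonal matrix
  have hdot : ∀ (x y : Fin (N+1) → ℝ),
      x ⬝ᵥ (Matrix.diagonal dv).mulVec y = ∑ i, x i * (dv i * y i) := by
    intro x y
    simp [dotProduct, mulVec_diagonal]
  -- key projection identity
  have key : ∀ w : Fin (N+1) → ℝ,
      g ⬝ᵥ (Matrix.diagonal dv).mulVec ((projA N dv).mulVec w)
        = g ⬝ᵥ (Matrix.diagonal dv).mulVec w := by
    intro w
    rw [hdot, hdot, ← sub_eq_zero, ← Finset.sum_sub_distrib]
    rw [← Finset.sum_subset (Finset.subset_univ ({0, L} : Finset (Fin (N+1))))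
      (fun j _ hj => by
        simp only [Finset.mem_insert, Finset.mem_singleton, not_or] at hj
        rw [projA_mulVec N hN, ← hL]
        simp [hj.1, hj.2])]
    rw [Finset.sum_pair h0L, projA_mulVec N hN, ← hL]
    simp only [hg0, hgL, if_pos (Or.inl rfl), if_pos (Or.inr rfl), eq_self_iff_true,
      true_or, or_true, ↓reduceIte]
    field_simp
    ring
  -- the inverse collapse
  have hdet : (Matrix.diagonal dv).det ≠ 0 := by
    rw [Matrix.det_diagonal]
    exact Finset.prod_ne_zero_iff.mpr fun i _ => (hdv i).ne'
  have hinv : Matrix.diagonal dv * (Matrix.diagonal dv)⁻¹ = 1 :=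
    Matrix.mul_nonsing_inv _ hdet.isUnit
  have hinvV : ∀ (V : Matrix (Fin (N+1)) (Fin N) ℝ),
      (Matrix.diagonal dv).mulVec (((Matrix.diagonal dv)⁻¹ * V).mulVec u) = V.mulVec u := by
    intro V
    rw [mulVec_mulVec, ← Matrix.mul_assoc, hinv, Matrix.one_mul]
  -- the rank-one term
  have hvmv : g ⬝ᵥ (Matrix.vecMulVec (Pi.single L 1 + Pi.single 0 1) (r - l)).mulVec u
      = (g L + g 0) * ((r - l) ⬝ᵥ u) := by
    simp only [vecMulVec, mulVec, dotProduct, Matrix.of_apply]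
    rw [Finset.mul_sum]
    rw [← Finset.sum_subset (Finset.subset_univ ({0, L} : Finset (Fin (N+1))))
      (fun j _ hj => by
        simp only [Finset.mem_insert, Finset.mem_singleton, not_or] at hj
        simp [Pi.single_apply, hj.1, hj.2, Finset.mul_sum])]
    rw [Finset.sum_pair h0L]
    simp [Pi.single_apply, h0L, h0L.symm, Finset.mul_sum]
    rw [← Finset.sum_add_distrib]
    exact Finset.sum_congr rfl fun x _ => by ring
  -- assemble
  rw [← mulVec_mulVec, ← mulVec_mulVec, ← hg, hsbp u g, key]
  rw [Matrix.sub_mulVec, smul_mulVec, mulVec_sub, mulVec_smul, dotProduct_sub,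
    dotProduct_smul, hinvV, hvmv]
  rw [sub_dotProduct] at *
  rw [hg0, hgL]
  field_simp
  linear_combination (-(dv 0 * h 0 + dv L * h L) * (r ⬝ᵥ u - l ⬝ᵥ u)) * mul_inv_cancel₀ hS
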